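/- For k = 0, 1, 2 let θ_k = 2kπ/3 and u_k = (sin θ_k, −cos θ_k), and define d_ext(x,y) = (1/4)·Σ_{k=0}^{2} |max(0, ⟨x, u_k⟩) − max(0, ⟨y, u_k⟩)| for x, y ∈ ℝ². Then: (a) d_ext(x,y) = (1/4)·μ_ext(Γ_{[x,y]}), where μ_ext = ν₀ + ν₁ + ν₂ with ν_k = (1/2)(f_k)_*(ℒ) + (1/2)(g_k)_*(ℒ), ℒ Lebesgue measure on [0,∞), f_k(t) = (θ_k, t), g_k(t) = (θ_k + π, −t); (b) d_ext is a pseudometric on ℝ² (symmetric, vanishing on the diagonal, satisfying the triangle inequality); and (c) d_ext is projective: d_ext(x,z) = d_ext(x,y) + d_ext(y,z) whenever y lies on the straight segment [x,z]. -/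

import Mathlib

noncomputable section

open MeasureTheory Real

instance : MeasurableSpace Real.Angle :=
  inferInstanceAs (MeasurableSpace (AddCircle (2 * π)))

/-- The space `Γ = (ℝ/2πℤ) × ℝ` parameterizing the lines of the Euclidean plane. -/
abbrev LineSpace : Type := Real.Angle × ℝ

/-- The line `ℓ(θ, p) = {z : z₁ sin θ − z₂ cos θ = p}` corresponding to `(θ, p) ∈ Γ`. -/
def lineOf (γ : LineSpace) : Set (ℝ × ℝ) :=
  {z : ℝ × ℝ | z.1 * γ.1.sin - z.2 * γ.1.cos = γ.2}

/-- `Γ_A`: the set of (parameters of) lines meeting a given subset `A` of the plane. -/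
def linesMeeting (A : Set (ℝ × ℝ)) : Set LineSpace :=
  {γ : LineSpace | (lineOf γ ∩ A).Nonempty}

/-- A Borel measure `μ` on the space of lines is *admissible* if it is invariant under
the involution `(θ, p) ↦ (θ + π, −p)` reversing orientations, is finite on compact sets,
and gives measure zero to the set of lines through any given point of the plane. -/
def Admissible (μ : Measure LineSpace) : Prop :=
  μ.map (fun γ : LineSpace => (γ.1 + ((π : ℝ) : Real.Angle), -γ.2)) = μ ∧
    (∀ K : Set LineSpace, IsCompact K → μ K < ⊤) ∧
    (∀ z : ℝ × ℝ, μ (linesMeeting {z}) = 0)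

/-- The pseudo-distance `d_μ(x, y) = (1/4)·μ(Γ_{[x,y]})` induced by a measure `μ` on the
space of lines. -/
def lineDist (μ : Measure LineSpace) (x y : ℝ × ℝ) : ℝ :=
  (μ (linesMeeting (segment ℝ x y))).toReal / 4

/-- The area `area_μ(A) = (1/(8π))·(μ ⊗ μ)({pairs of distinct lines meeting inside A})`
induced by a measure `μ` on the space of lines (the Santaló+Blaschke area). -/
def lineArea (μ : Measure LineSpace) (A : Set (ℝ × ℝ)) : ℝ :=
  ((μ.prod μ) {γ : LineSpace × LineSpace |
      lineOf γ.1 ≠ lineOf γ.2 ∧ (lineOf γ.1 ∩ lineOf γ.2 ∩ A).Nonempty}).toReal / (8 * π)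

/-- Weak convergence of a sequence of measures: convergence of the integrals of all
bounded continuous functions. -/
def WeakTendsto (μs : ℕ → Measure LineSpace) (μ : Measure LineSpace) : Prop :=
  ∀ f : BoundedContinuousFunction LineSpace ℝ,
    Filter.Tendsto (fun n => ∫ γ, f γ ∂(μs n)) Filter.atTop (nhds (∫ γ, f γ ∂μ))

open scoped ENNReal

/-- The unit vector `u_k = (sin θ_k, −cos θ_k)` with `θ_k = 2kπ/3`. -/
def uExt (k : ℕ) : ℝ × ℝ :=
  (Real.sin (2 * k * π / 3), -Real.cos (2 * k * π / 3))

/-- The standard inner product of `ℝ²`. -/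
def dot2 (x u : ℝ × ℝ) : ℝ := x.1 * u.1 + x.2 * u.2

/-- `f_k(t) = (θ_k, t)` where `θ_k = 2kπ/3`. -/
def fExt (k : ℕ) : ℝ → LineSpace := fun t => (((2 * k * π / 3 : ℝ) : Real.Angle), t)

/-- `g_k(t) = (θ_k + π, −t)` where `θ_k = 2kπ/3`. -/
def gExt (k : ℕ) : ℝ → LineSpace := fun t => (((2 * k * π / 3 + π : ℝ) : Real.Angle), -t)

/-- The measure `ν_k = (1/2)(f_k)_*(ℒ) + (1/2)(g_k)_*(ℒ)`, where `ℒ` is the Lebesgue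
measure on `[0, ∞)`. -/
def nuExt (k : ℕ) : Measure LineSpace :=
  (1 / 2 : ℝ≥0∞) • (volume.restrict (Set.Ici (0 : ℝ))).map (fExt k) +
    (1 / 2 : ℝ≥0∞) • (volume.restrict (Set.Ici (0 : ℝ))).map (gExt k)

/-- The extremal measure `μ_ext = ν₀ + ν₁ + ν₂`, concentrated on three pencils of
parallel lines. -/
def muExt : Measure LineSpace := nuExt 0 + nuExt 1 + nuExt 2

/-- The ball `H_r = {x ∈ ℝ² : ∑ₖ max(0, ⟨x, u_k⟩) ≤ 4r}` of radius `r` centered at the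
origin for the pseudo-metric induced by `μ_ext`. -/
def hexBall (r : ℝ) : Set (ℝ × ℝ) :=
  {x : ℝ × ℝ | ∑ k ∈ Finset.range 3, max 0 (dot2 x (uExt k)) ≤ 4 * r}

/-- The extremal distance
`d_ext(x, y) = (1/4)·∑ₖ |max(0, ⟨x, u_k⟩) − max(0, ⟨y, u_k⟩)|`. -/
def dExt (x y : ℝ × ℝ) : ℝ :=
  (1 / 4) * ∑ k ∈ Finset.range 3, |max 0 (dot2 x (uExt k)) - max 0 (dot2 y (uExt k))|

/-! The lines of the `k`-th pencil are the level sets `{⟨z, u_k⟩ = t}`, so such a line meets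
`[x, y]` iff `t` lies between `⟨x, u_k⟩` and `⟨y, u_k⟩`. Both halves of `ν_k` put Lebesgue
measure on `t ≥ 0`, hence `ν_k(Γ_{[x,y]}) = |max(0, ⟨x, u_k⟩) − max(0, ⟨y, u_k⟩)|`. Each summand
of `d_ext` is the distance between images under the monotone map `t ↦ max(0, t)` of the
projections, so it is a pseudometric that is additive along segments. -/

instance : MeasurableSingletonClass Real.Angle :=
  inferInstanceAs (MeasurableSingletonClass (AddCircle (2 * π)))

lemma image_dot2_segment (u x y : ℝ × ℝ) :
    (dot2 · u) '' segment ℝ x y = segment ℝ (dot2 x u) (dot2 y u) := by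
  let L : ℝ × ℝ →ₗ[ℝ] ℝ := u.1 • LinearMap.fst ℝ ℝ ℝ + u.2 • LinearMap.snd ℝ ℝ ℝ
  have hL : ⇑L.toAffineMap = (dot2 · u) := by
    funext z
    simp [L, dot2, mul_comm]
  simpa only [hL] using image_segment ℝ L.toAffineMap x y

lemma lineOf_fExt (k : ℕ) (t : ℝ) : lineOf (fExt k t) = {z | dot2 z (uExt k) = t} := by
  ext z
  simp only [lineOf, fExt, dot2, uExt, Set.mem_ofPred_eq, Real.Angle.sin_coe, Real.Angle.cos_coe]
  ring_nf

lemma lineOf_gExt (k : ℕ) (t : ℝ) : lineOf (gExt k t) = {z | dot2 z (uExt k) = t} := by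
  ext z
  simp only [lineOf, gExt, dot2, uExt, Set.mem_ofPred_eq, Real.Angle.sin_coe, Real.Angle.cos_coe,
    Real.sin_add_pi, Real.cos_add_pi]
  constructor <;> intro h <;> linarith

lemma preimage_linesMeeting_eq_image_dot2 {φ : ℝ → LineSpace} {u : ℝ × ℝ}
    (hφ : ∀ t, lineOf (φ t) = {z | dot2 z u = t}) (A : Set (ℝ × ℝ)) :
    φ ⁻¹' linesMeeting A = (dot2 · u) '' A := by
  ext t
  simp only [linesMeeting, Set.mem_preimage, Set.mem_ofPred_eq, hφ, Set.mem_image]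
  exact ⟨fun ⟨z, hzt, hzA⟩ => ⟨z, hzA, hzt⟩, fun ⟨z, hzA, hzt⟩ => ⟨z, hzt, hzA⟩⟩

lemma volume_segment_inter_Ici_zero (a b : ℝ) :
    volume (segment ℝ a b ∩ Set.Ici 0) = ENNReal.ofReal |max 0 a - max 0 b| := by
  rw [segment_eq_uIcc, Set.uIcc, ← Set.Ici_inter_Iic, Set.inter_right_comm, Set.Ici_inter_Ici,
    Set.Ici_inter_Iic, Real.volume_Icc]
  rcases le_total a b with hab | hab <;> rcases le_total 0 a with ha | ha <;>
    rcases le_total 0 b with hb | hb <;>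
    simp [*, abs_of_nonneg, abs_of_nonpos] <;> linarith

lemma nuExt_linesMeeting_segment (k : ℕ) (x y : ℝ × ℝ) :
    nuExt k (linesMeeting (segment ℝ x y))
      = ENNReal.ofReal |max 0 (dot2 x (uExt k)) - max 0 (dot2 y (uExt k))| := by
  have hf : MeasurableEmbedding (fExt k) := measurableEmbedding_prodMk_left _
  have hg : MeasurableEmbedding (gExt k) :=
    (measurableEmbedding_prodMk_left _).comp (MeasurableEquiv.neg ℝ).measurableEmbedding
  rw [nuExt, Measure.add_apply, Measure.smul_apply, Measure.smul_apply, hf.map_apply,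
    hg.map_apply, Measure.restrict_apply' measurableSet_Ici,
    Measure.restrict_apply' measurableSet_Ici,
    preimage_linesMeeting_eq_image_dot2 (lineOf_fExt k),
    preimage_linesMeeting_eq_image_dot2 (lineOf_gExt k), image_dot2_segment,
    volume_segment_inter_Ici_zero, smul_eq_mul, ← add_mul, ENNReal.add_halves, one_mul]

lemma muExt_linesMeeting_segment (x y : ℝ × ℝ) :
    (muExt (linesMeeting (segment ℝ x y))).toReal
      = ∑ k ∈ Finset.range 3, |max 0 (dot2 x (uExt k)) - max 0 (dot2 y (uExt k))| := by
  simp only [muExt, Measure.add_apply, nuExt_linesMeeting_segment, Finset.sum_range_succ,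
    Finset.sum_range_zero, zero_add]
  rw [ENNReal.toReal_add (by finiteness) ENNReal.ofReal_ne_top,
    ENNReal.toReal_add ENNReal.ofReal_ne_top ENNReal.ofReal_ne_top]
  simp only [ENNReal.toReal_ofReal (abs_nonneg _)]

lemma abs_max_zero_dot2_sub_eq_add_of_mem_segment (u : ℝ × ℝ) {x y z : ℝ × ℝ}
    (hy : y ∈ segment ℝ x z) :
    |max 0 (dot2 x u) - max 0 (dot2 z u)|
      = |max 0 (dot2 x u) - max 0 (dot2 y u)| + |max 0 (dot2 y u) - max 0 (dot2 z u)| := by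
  have hdot : dot2 y u ∈ Set.uIcc (dot2 x u) (dot2 z u) := by
    rw [← segment_eq_uIcc, ← image_dot2_segment]
    exact Set.mem_image_of_mem _ hy
  have hmax := (monotone_const.max monotone_id : Monotone fun t : ℝ => max 0 t).mapsTo_uIcc hdot
  rw [← segment_eq_uIcc] at hmax
  simpa only [Real.dist_eq] using (dist_add_dist_of_mem_segment hmax).symm

/-- **The extremal projective pseudo-distance** (Section 11 of the paper):
(a) `d_ext(x, y) = (1/4)·μ_ext(Γ_{[x,y]})`;
(b) `d_ext` is a pseudometric on `ℝ²`;
(c) `d_ext` is projective: `d_ext(x, z) = d_ext(x, y) + d_ext(y, z)` whenever `y` lies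
on the straight segment `[x, z]`. -/
theorem dExt_properties :
    (∀ x y : ℝ × ℝ, dExt x y = (muExt (linesMeeting (segment ℝ x y))).toReal / 4) ∧
      ((∀ x : ℝ × ℝ, dExt x x = 0) ∧ (∀ x y : ℝ × ℝ, dExt x y = dExt y x) ∧
        ∀ x y z : ℝ × ℝ, dExt x z ≤ dExt x y + dExt y z) ∧
      (∀ x y z : ℝ × ℝ, y ∈ segment ℝ x z → dExt x z = dExt x y + dExt y z) := by
  refine ⟨fun x y => ?_, ⟨fun x => ?_, fun x y => ?_, fun x y z => ?_⟩, fun x y z hy => ?_⟩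
  · rw [muExt_linesMeeting_segment, dExt]
    ring
  · simp [dExt]
  · simp [dExt, abs_sub_comm]
  · simp only [dExt, ← mul_add, ← Finset.sum_add_distrib]
    gcongr
    exact abs_sub_le _ _ _
  · simp only [dExt, ← mul_add, ← Finset.sum_add_distrib,
      abs_max_zero_dot2_sub_eq_add_of_mem_segment _ hy]
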